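/- The premium M_Ind(Λ, L) = Λ·E[Θ | Λ, L] with Λ independent of Θ and E[Θ] = 1 has zero fairness index: Var(E[M_Ind(Λ,L)/Λ | Λ]) = 0. -/

import Mathlib

/-!
Dividing out `Λ` leaves `γInd (Λ, L)`, which is `E[Θ | Λ, L]` because the pair `(Λ, L)` takes
finitely many values, so conditioning on it is averaging over its level sets. By the tower
property and `Λ ⟂ Θ`, conditioning further on `Λ` gives `E[Θ | Λ] = E[Θ] = 1`, a constant.
-/

open MeasureTheory ProbabilityTheory

namespace ProbabilityTheory

variable {Ω β : Type*} {m0 : MeasurableSpace Ω} {μ : Measure Ω}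

lemma measureReal_smul_integral_cond [IsFiniteMeasure μ] (s : Set Ω) (f : Ω → ℝ) :
    μ.real s • ∫ ω, f ω ∂μ[|s] = ∫ ω in s, f ω ∂μ := by
  by_cases hs : μ s = 0
  · simp [Measure.real, hs, Measure.restrict_eq_zero.2 hs]
  · rw [cond, integral_smul_measure, smul_smul, ENNReal.toReal_inv, measureReal_def,
      mul_inv_cancel₀ (ENNReal.toReal_ne_zero.2 ⟨hs, measure_ne_top μ s⟩), one_smul]

variable [MeasurableSpace β] [MeasurableSingletonClass β] {X : Ω → β}

lemma measurable_comap_comp_of_countable_range (hX : (Set.range X).Countable) (g : β → ℝ) :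
    Measurable[MeasurableSpace.comap X inferInstance] (g ∘ X) := fun S _ =>
  ⟨g ⁻¹' S ∩ Set.range X, (hX.mono Set.inter_subset_right).measurableSet,
    Set.preimage_inter_range⟩

lemma integrable_comp_of_finite_range [IsFiniteMeasure μ] (hX : Measurable X)
    (hfin : (Set.range X).Finite) (g : β → ℝ) : Integrable (g ∘ X) μ := by
  obtain ⟨C, hC⟩ := ((hfin.image g).image norm).bddAbove
  refine .of_bound ((measurable_comap_comp_of_countable_range hfin.countable g).mono
    hX.comap_le le_rfl).aestronglyMeasurable C (.of_forall fun ω => hC ?_)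
  exact ⟨g (X ω), ⟨X ω, ⟨ω, rfl⟩, rfl⟩, rfl⟩

lemma setIntegral_preimage_eq_sum_fibers (hX : Measurable X) {t : Set β}
    (ht : (t ∩ Set.range X).Finite) {f : Ω → ℝ} (hf : Integrable f μ) :
    ∫ ω in X ⁻¹' t, f ω ∂μ = ∑ x ∈ ht.toFinset, ∫ ω in X ⁻¹' {x}, f ω ∂μ := by
  rw [show X ⁻¹' t = ⋃ x ∈ ht.toFinset, X ⁻¹' {x} by
    simp only [Set.Finite.mem_toFinset, Set.biUnion_preimage_singleton, Set.preimage_inter_range]]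
  exact integral_biUnion_finset _ (fun x _ => hX (measurableSet_singleton x))
    ((Set.pairwiseDisjoint_fiber X _).subset (Set.subset_univ _)) fun _ _ => hf.integrableOn

theorem condExp_comap_ae_eq_integral_cond [IsFiniteMeasure μ] (hX : Measurable X)
    (hfin : (Set.range X).Finite) {Y : Ω → ℝ} (hY : Integrable Y μ) :
    μ[Y | MeasurableSpace.comap X inferInstance] =ᵐ[μ] fun ω => ∫ y, Y y ∂μ[|X ⁻¹' {X ω}] := by
  set g : β → ℝ := fun x => ∫ y, Y y ∂μ[|X ⁻¹' {x}]
  have hg := integrable_comp_of_finite_range (μ := μ) hX hfin g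
  refine (ae_eq_condExp_of_forall_setIntegral_eq hX.comap_le hY
    (fun _ _ _ => hg.integrableOn) ?_
    (measurable_comap_comp_of_countable_range hfin.countable g).aestronglyMeasurable).symm
  rintro _ ⟨t, -, rfl⟩ -
  have ht : (t ∩ Set.range X).Finite := hfin.subset Set.inter_subset_right
  rw [setIntegral_preimage_eq_sum_fibers hX ht hg, setIntegral_preimage_eq_sum_fibers hX ht hY]
  refine Finset.sum_congr rfl fun x _ => ?_
  calc ∫ ω in X ⁻¹' {x}, g (X ω) ∂μ = ∫ _ in X ⁻¹' {x}, g x ∂μ :=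
        setIntegral_congr_fun (hX (measurableSet_singleton x)) fun ω hω => by
          rw [Set.mem_preimage.1 hω |> Set.mem_singleton_iff.1]
    _ = ∫ ω in X ⁻¹' {x}, Y ω ∂μ := by
        rw [setIntegral_const, measureReal_smul_integral_cond]

end ProbabilityTheory

theorem poi_premium_zero_fix_general
    {Ω : Type*} [m0 : MeasurableSpace Ω] (μ : Measure Ω) [IsProbabilityMeasure μ]
    (Λ Θ : Ω → ℝ) {z : ℕ} (L : Ω → Fin z)
    (hΛ : Measurable Λ) (hΘ : Measurable Θ) (hL : Measurable L)
    (hfin : (Set.range Λ).Finite) (hΛpos : ∀ ω, 0 < Λ ω)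
    (hΘ2 : MemLp Θ 2 μ)
    (hΘmean : ∫ ω, Θ ω ∂μ = 1)
    (hindep : IndepFun Λ Θ μ)
    (γInd : ℝ → Fin z → ℝ)
    (hγInd : ∀ (l : ℝ) (ℓ : Fin z), γInd l ℓ =
        ∫ ω, Θ ω ∂(μ[|Λ ⁻¹' {l} ∩ L ⁻¹' {ℓ}])) :
    variance (μ[fun ω => (Λ ω * γInd (Λ ω) (L ω)) / Λ ω
        | MeasurableSpace.comap Λ inferInstance]) μ = 0 := by
  set Z : Ω → ℝ × Fin z := fun ω => (Λ ω, L ω)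
  have hZ : Measurable Z := hΛ.prodMk hL
  have hZfin : (Set.range Z).Finite :=
    (hfin.prod Set.finite_univ).subset (Set.range_subset_iff.2 fun ω => ⟨⟨ω, rfl⟩, trivial⟩)
  have hΛZ : MeasurableSpace.comap Λ inferInstance ≤ MeasurableSpace.comap Z inferInstance :=
    (measurable_fst.comp (comap_measurable Z)).comap_le
  have hpremium : (fun ω => (Λ ω * γInd (Λ ω) (L ω)) / Λ ω)
      =ᵐ[μ] μ[Θ | MeasurableSpace.comap Z inferInstance] := by
    filter_upwards [condExp_comap_ae_eq_integral_cond hZ hZfin (hΘ2.integrable one_le_two)]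
      with ω hω
    rw [hω, mul_div_cancel_left₀ _ (hΛpos ω).ne', hγInd]
    congr 2
    ext; simp [Z, Prod.ext_iff]
  have hconst : μ[fun ω => (Λ ω * γInd (Λ ω) (L ω)) / Λ ω
      | MeasurableSpace.comap Λ inferInstance] =ᵐ[μ] fun _ => (1 : ℝ) :=
    calc _ =ᵐ[μ] μ[μ[Θ | MeasurableSpace.comap Z inferInstance]
          | MeasurableSpace.comap Λ inferInstance] := condExp_congr_ae hpremium
      _ =ᵐ[μ] μ[Θ | MeasurableSpace.comap Λ inferInstance] :=
          condExp_condExp_of_le hΛZ hZ.comap_le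
      _ =ᵐ[μ] fun _ => μ[Θ] := condExp_indep_eq hΘ.comap_le hΛ.comap_le
          (comap_measurable Θ).stronglyMeasurable hindep.symm
      _ = fun _ => (1 : ℝ) := by rw [hΘmean]
  rw [variance_congr hconst]
  simp [variance, evariance]

/-- The individualized premium `M_Ind(Λ, L) = Λ·E[Θ | Λ, L]` has zero fairness index:
`Var(E[M_Ind(Λ,L)/Λ | Λ]) = 0`, when `Λ ⟂ Θ` and `E[Θ] = 1`. -/
theorem poi_premium_zero_fix
    {Ω : Type*} [m0 : MeasurableSpace Ω] (μ : Measure Ω) [IsProbabilityMeasure μ]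
    (Λ Θ : Ω → ℝ) {z : ℕ} (L : Ω → Fin z)
    (hΛ : Measurable Λ) (hΘ : Measurable Θ) (hL : Measurable L)
    (hfin : (Set.range Λ).Finite) (hΛpos : ∀ ω, 0 < Λ ω)
    (hΘnonneg : ∀ ω, 0 ≤ Θ ω) (hΘ2 : MemLp Θ 2 μ)
    (hΘmean : ∫ ω, Θ ω ∂μ = 1)
    (hindep : IndepFun Λ Θ μ)
    (γInd : ℝ → Fin z → ℝ)
    (hγInd : ∀ (l : ℝ) (ℓ : Fin z), γInd l ℓ =
        ∫ ω, Θ ω ∂(μ[|Λ ⁻¹' {l} ∩ L ⁻¹' {ℓ}])) :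
    variance (μ[fun ω => (Λ ω * γInd (Λ ω) (L ω)) / Λ ω
        | MeasurableSpace.comap Λ inferInstance]) μ = 0 :=
  poi_premium_zero_fix_general (m0 := m0) μ Λ Θ L hΛ hΘ hL hfin hΛpos hΘ2 hΘmean hindep γInd hγInd
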